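/- arXiv:2403.01749 — 2 statements merged into one kernel-verified Lean document; each statement's English description precedes it below -/
import Mathlib

section
/- For all ε ≥ 0 and σ > 0, the quantity Φ(Δ/(2σ) − εσ/Δ) − e^ε·Φ(−Δ/(2σ) − εσ/Δ) is nonnegative, where Φ is the standard normal CDF and Δ > 0. -/
/-!
Substituting `t ↦ t - 2a` turns `Φ(-a - b)` into an integral over `t ≤ a - b` of `e^{-(t - 2a)²/2}`, and
`2ab - (t - 2a)²/2 = -t²/2 + 2a (t - a + b) ≤ -t²/2` there. Hence `e^{2ab} Φ(-a - b) ≤ Φ(a - b)` for `a ≥ 0`,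
and `a = Δ/(2σ)`, `b = εσ/Δ` give `2ab = ε`.
-/

open MeasureTheory Real Set Filter

/-- The standard normal CDF. -/
noncomputable def stdΦ (x : ℝ) : ℝ :=
  (Real.sqrt (2 * Real.pi))⁻¹ * ∫ t in Set.Iic x, Real.exp (-t ^ 2 / 2)

lemma setIntegral_Iic_sub {E : Type*} [NormedAddCommGroup E] [NormedSpace ℝ E] (f : ℝ → E)
    (x c : ℝ) :
    ∫ t in Iic (x - c), f t = ∫ t in Iic x, f (t - c) := by
  have hpre : (fun t : ℝ => t - c) ⁻¹' Iic (x - c) = Iic x := by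
    ext t
    simp
  rw [← (measurePreserving_sub_right volume c).setIntegral_preimage_emb
    (MeasurableEquiv.subRight c).measurableEmbedding f, hpre]

lemma integrable_exp_neg_sq_div_two : Integrable (fun t : ℝ => exp (-t ^ 2 / 2)) := by
  convert integrable_exp_neg_mul_sq (b := (1 : ℝ) / 2) (by norm_num) using 2 with t
  ring_nf

lemma exp_mul_exp_neg_sub_sq_le {a b t : ℝ} (ha : 0 ≤ a) (ht : t ≤ a - b) :
    exp (2 * a * b) * exp (-(t - 2 * a) ^ 2 / 2) ≤ exp (-t ^ 2 / 2) := by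
  rw [← exp_add, exp_le_exp]
  nlinarith

lemma exp_mul_stdΦ_le {a b : ℝ} (ha : 0 ≤ a) :
    exp (2 * a * b) * stdΦ (-a - b) ≤ stdΦ (a - b) := by
  have hshift : ∫ t in Iic (-a - b), exp (-t ^ 2 / 2)
      = ∫ t in Iic (a - b), exp (-(t - 2 * a) ^ 2 / 2) := by
    rw [← setIntegral_Iic_sub (fun t => exp (-t ^ 2 / 2))]
    ring_nf
  have hint_shift : Integrable (fun t : ℝ => exp (2 * a * b) * exp (-(t - 2 * a) ^ 2 / 2)) :=
    (integrable_exp_neg_sq_div_two.comp_sub_right (2 * a)).const_mul _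
  have hmono : ∫ t in Iic (a - b), exp (2 * a * b) * exp (-(t - 2 * a) ^ 2 / 2)
      ≤ ∫ t in Iic (a - b), exp (-t ^ 2 / 2) :=
    setIntegral_mono_on hint_shift.integrableOn integrable_exp_neg_sq_div_two.integrableOn
      measurableSet_Iic fun t ht => exp_mul_exp_neg_sub_sq_le ha ht
  unfold stdΦ
  rw [hshift, mul_left_comm, ← integral_const_mul]
  gcongr

theorem stmt0_general (Δ σ ε : ℝ) (hΔ : 0 < Δ) (hσ : 0 < σ) :
    0 ≤ stdΦ (Δ / (2 * σ) - ε * σ / Δ) - Real.exp ε * stdΦ (-(Δ / (2 * σ)) - ε * σ / Δ) := by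
  have hε : 2 * (Δ / (2 * σ)) * (ε * σ / Δ) = ε := by
    field_simp
  have hΦ := exp_mul_stdΦ_le (a := Δ / (2 * σ)) (b := ε * σ / Δ) (by positivity)
  rw [hε] at hΦ
  linarith

theorem stmt0 (Δ σ ε : ℝ) (hΔ : 0 < Δ) (hσ : 0 < σ) (hε : 0 ≤ ε) :
    0 ≤ stdΦ (Δ / (2 * σ) - ε * σ / Δ) - Real.exp ε * stdΦ (-(Δ / (2 * σ)) - ε * σ / Δ) :=
  stmt0_general Δ σ ε hΔ hσ
end

section
/- The total variation distance between N(0, σ²) and N(Δ, σ²) on ℝ equals 2Φ(Δ/(2σ)) − 1, for Δ > 0, σ > 0. -/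
open MeasureTheory Real Set ProbabilityTheory

/-- Total variation distance between two measures. -/
noncomputable def tvDist (P Q : Measure ℝ) : ℝ :=
  ⨆ A : {A : Set ℝ // MeasurableSet A}, |(P A.1).toReal - (Q A.1).toReal|

/-!
The density of `N(Δ, σ²)` exceeds that of `N(0, σ²)` exactly to the right of the midpoint `Δ / 2`.
Hence (Scheffé) the supremum defining the total variation distance is attained at the half-line
`(Δ / 2, ∞)`, which has mass `Φ(Δ / (2σ))` under `N(Δ, σ²)` and `1 - Φ(Δ / (2σ))` under `N(0, σ²)`.
-/

open scoped NNReal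

section TotalVariation

variable {α : Type*} [MeasurableSpace α] {P Q : Measure α} {S : Set α}

lemma measureReal_le_of_restrict_le [IsFiniteMeasure Q] (h : P.restrict S ≤ Q.restrict S)
    {T : Set α} (hT : T ⊆ S) : P.real T ≤ Q.real T := by
  have hT' := h T
  rw [Measure.restrict_eq_self _ hT, Measure.restrict_eq_self _ hT] at hT'
  exact ENNReal.toReal_mono (measure_ne_top Q T) hT'

variable [IsFiniteMeasure P] [IsFiniteMeasure Q]

lemma sub_measureReal_le_of_restrict_le (hS : MeasurableSet S)
    (hPQ : P.restrict S ≤ Q.restrict S) (hQP : Q.restrict Sᶜ ≤ P.restrict Sᶜ)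
    {A : Set α} (hA : MeasurableSet A) :
    Q.real A - P.real A ≤ Q.real S - P.real S := by
  have hQA := measureReal_inter_add_sdiff (μ := Q) (s := A) hS
  have hPA := measureReal_inter_add_sdiff (μ := P) (s := A) hS
  have hQS := measureReal_inter_add_sdiff (μ := Q) (s := S) hA
  have hPS := measureReal_inter_add_sdiff (μ := P) (s := S) hA
  have hout : Q.real (A \ S) ≤ P.real (A \ S) :=
    measureReal_le_of_restrict_le hQP fun _ hx => hx.2
  have hin : P.real (S \ A) ≤ Q.real (S \ A) :=
    measureReal_le_of_restrict_le hPQ sdiff_subset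
  rw [inter_comm] at hQS hPS
  linarith

lemma abs_sub_measureReal_le_of_restrict_le (huniv : P univ = Q univ) (hS : MeasurableSet S)
    (hPQ : P.restrict S ≤ Q.restrict S) (hQP : Q.restrict Sᶜ ≤ P.restrict Sᶜ)
    {A : Set α} (hA : MeasurableSet A) :
    |P.real A - Q.real A| ≤ Q.real S - P.real S := by
  have hcompl : P.real A - Q.real A = Q.real Aᶜ - P.real Aᶜ := by
    have huniv' : P.real univ = Q.real univ := congrArg ENNReal.toReal huniv
    rw [measureReal_compl hA, measureReal_compl hA]
    linarith
  rw [abs_sub_le_iff, hcompl]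
  exact ⟨sub_measureReal_le_of_restrict_le hS hPQ hQP hA.compl,
    sub_measureReal_le_of_restrict_le hS hPQ hQP hA⟩

end TotalVariation

lemma tvDist_eq_of_restrict_le {P Q : Measure ℝ} [IsFiniteMeasure P] [IsFiniteMeasure Q]
    {S : Set ℝ} (huniv : P univ = Q univ) (hS : MeasurableSet S)
    (hPQ : P.restrict S ≤ Q.restrict S) (hQP : Q.restrict Sᶜ ≤ P.restrict Sᶜ) :
    tvDist P Q = Q.real S - P.real S := by
  have hle (A : {A : Set ℝ // MeasurableSet A}) : |P.real A.1 - Q.real A.1| ≤ Q.real S - P.real S :=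
    abs_sub_measureReal_le_of_restrict_le huniv hS hPQ hQP A.2
  refine le_antisymm (ciSup_le hle) ?_
  refine le_ciSup_of_le ⟨_, Set.forall_mem_range.2 hle⟩ ⟨S, hS⟩ ?_
  exact (le_abs_self _).trans_eq (abs_sub_comm _ _)

lemma gaussianPDFReal_le_gaussianPDFReal_iff {μ₁ μ₂ : ℝ} {v : ℝ≥0} (hv : v ≠ 0) (x : ℝ) :
    gaussianPDFReal μ₁ v x ≤ gaussianPDFReal μ₂ v x ↔ (x - μ₂) ^ 2 ≤ (x - μ₁) ^ 2 := by
  have hv' : (0 : ℝ) < v := NNReal.coe_pos.2 (pos_iff_ne_zero.2 hv)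
  rw [gaussianPDFReal, gaussianPDFReal, mul_le_mul_iff_right₀ (by positivity), exp_le_exp,
    div_le_div_iff_of_pos_right (by positivity), neg_le_neg_iff]

lemma gaussianReal_restrict_le_restrict {μ₁ μ₂ : ℝ} {v : ℝ≥0} (hv : v ≠ 0) {s : Set ℝ}
    (hs : MeasurableSet s) (h : ∀ x ∈ s, gaussianPDFReal μ₁ v x ≤ gaussianPDFReal μ₂ v x) :
    (gaussianReal μ₁ v).restrict s ≤ (gaussianReal μ₂ v).restrict s := by
  rw [gaussianReal_of_var_ne_zero _ hv, gaussianReal_of_var_ne_zero _ hv,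
    restrict_withDensity hs, restrict_withDensity hs]
  exact withDensity_mono <| (ae_restrict_iff' hs).2 <| ae_of_all _ fun x hx =>
    ENNReal.ofReal_le_ofReal (h x hx)

lemma measureReal_gaussianReal_zero_one_Iic (c : ℝ) :
    (gaussianReal 0 1).real (Iic c) = stdΦ c := by
  rw [measureReal_def, gaussianReal_apply_eq_integral _ one_ne_zero,
    ENNReal.toReal_ofReal (setIntegral_nonneg measurableSet_Iic
      fun x _ => gaussianPDFReal_nonneg _ _ _), stdΦ, ← integral_const_mul]
  simp [gaussianPDFReal]

lemma stdΦ_neg (c : ℝ) : stdΦ (-c) = 1 - stdΦ c := by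
  have : NullSingletonClass (gaussianReal 0 1) := nullSingletonClass_gaussianReal one_ne_zero
  have hsymm : (gaussianReal 0 1).real (Iic (-c)) = (gaussianReal 0 1).real (Ici c) := by
    conv_lhs => rw [← neg_zero, ← gaussianReal_map_neg,
      map_measureReal_apply measurable_neg measurableSet_Iic]
    simp
  rw [← measureReal_gaussianReal_zero_one_Iic, ← measureReal_gaussianReal_zero_one_Iic, hsymm,
    ← compl_Iio, probReal_compl_eq_one_sub measurableSet_Iio, measureReal_congr Iio_ae_eq_Iic]

lemma measureReal_gaussianReal_Iic (μ : ℝ) {σ : ℝ} (hσ : 0 < σ) (a : ℝ) :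
    (gaussianReal μ (σ ^ 2).toNNReal).real (Iic a) = stdΦ ((a - μ) / σ) := by
  have hstd : ((gaussianReal μ (σ ^ 2).toNNReal).map (· - μ)).map (· / σ) = gaussianReal 0 1 := by
    rw [gaussianReal_map_sub_const, gaussianReal_map_div_const, sub_self, zero_div]
    congr
    ext
    simp [hσ.ne', sq_nonneg]
  rw [← measureReal_gaussianReal_zero_one_Iic, ← hstd,
    map_measureReal_apply (by fun_prop) measurableSet_Iic,
    map_measureReal_apply (by fun_prop) (measurableSet_Iic.preimage (by fun_prop))]
  congr 1
  ext x
  simp [div_le_div_iff_of_pos_right hσ]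

theorem stmt18 (Δ σ : ℝ) (hΔ : 0 < Δ) (hσ : 0 < σ) :
    tvDist (gaussianReal 0 ((σ ^ 2).toNNReal)) (gaussianReal Δ ((σ ^ 2).toNNReal))
      = 2 * stdΦ (Δ / (2 * σ)) - 1 := by
  have hv : (σ ^ 2).toNNReal ≠ 0 := by simp [hσ.ne']
  have hPQ := gaussianReal_restrict_le_restrict (μ₁ := 0) (μ₂ := Δ) hv
    (measurableSet_Ioi (a := Δ / 2)) fun x (hx : Δ / 2 < x) =>
      (gaussianPDFReal_le_gaussianPDFReal_iff hv x).2 (by nlinarith)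
  have hQP := gaussianReal_restrict_le_restrict (μ₁ := Δ) (μ₂ := 0) hv
    (measurableSet_Ioi (a := Δ / 2)).compl fun x (hx : ¬Δ / 2 < x) =>
      (gaussianPDFReal_le_gaussianPDFReal_iff hv x).2 (by nlinarith [not_lt.1 hx])
  rw [tvDist_eq_of_restrict_le (by simp) measurableSet_Ioi hPQ hQP, ← compl_Iic,
    probReal_compl_eq_one_sub measurableSet_Iic, probReal_compl_eq_one_sub measurableSet_Iic,
    measureReal_gaussianReal_Iic _ hσ, measureReal_gaussianReal_Iic _ hσ,
    show (Δ / 2 - Δ) / σ = -(Δ / (2 * σ)) by field_simp; ring,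
    sub_zero, div_div, stdΦ_neg]
  ring
end
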